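/- arXiv:2112.12949 — 3 statements merged into one kernel-verified Lean document; each statement's English description precedes it below -/
import Mathlib

section
/- Fix real constants η > 0, C > 0, and ε > 0. There exists X₀ > 0 such that the following holds for every real X ≥ X₀: for every natural number r with r ≤ log X / log log X, and every function f : ℂ → ℂ that is complex-differentiable on the closed disk {s ∈ ℂ : |s − 1| ≤ 1/2}, if |f(s)| ≤ C · X^{1/2 + |s−1| − η} for all s with |s − 1| ≤ 1/2, and the k-th derivative of f at 1 vanishes for every k < r, then the r-th Taylor coefficient of f at 1 satisfies |f⁽ʳ⁾(1)/r!| ≤ X^{1/2 − η + ε}. (This is the abstract complex-analytic content of Lemma 2.5 of the paper, which bounds the leading Taylor coefficient of an L-function at its central point given a subconvex bound and a rank bound.) -/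
/-!
Cauchy's estimate on the circle `|s - 1| = ρ` bounds the `r`-th Taylor coefficient by
`C X ^ (1/2 - η) · X ^ ρ / ρ ^ r`. Taking `ρ = t / log X` with `t = max r 1` turns the weight
`X ^ ρ / ρ ^ r` into `e ^ t (log X / t) ^ r ≤ exp (t (1 + log (log X / t)))`, which increases in
`t`; at the largest admissible value `t = log X / log log X` it equals
`exp (log X · (1 + log log log X) / log log X) = X ^ o(1)`.
-/

open Metric Real Filter Topology

lemma mul_one_add_log_div_le_of_le {s t L : ℝ} (hs : 0 < s) (hst : s ≤ t) (htL : t ≤ L) :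
    s * (1 + log (L / s)) ≤ t * (1 + log (L / t)) := by
  have ht : 0 < t := hs.trans_le hst
  have hL : 0 < L := ht.trans_le htL
  have hLt : 0 ≤ log (L / t) := log_nonneg ((one_le_div ht).mpr htL)
  have hsplit : log (L / s) = log (L / t) + log (t / s) := by
    rw [← log_mul (by positivity) (by positivity)]
    field_simp
  have hts : s * log (t / s) ≤ t - s := by
    have := mul_le_mul_of_nonneg_left (log_le_sub_one_of_pos (div_pos ht hs)) hs.le
    rwa [mul_sub, mul_div_cancel₀ _ hs.ne', mul_one] at this
  nlinarith

lemma exp_mul_div_pow_le {t L : ℝ} {r : ℕ} (ht : 0 < t) (hr : r ≤ t) (htL : t ≤ L) :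
    exp t * (L / t) ^ r ≤ exp (t * (1 + log (L / t))) := by
  have hLt : 1 ≤ L / t := (one_le_div ht).mpr htL
  calc exp t * (L / t) ^ r = exp t * (L / t) ^ (r : ℝ) := by rw [rpow_natCast]
    _ ≤ exp t * (L / t) ^ t := by gcongr
    _ = exp (t * (1 + log (L / t))) := by
      rw [rpow_def_of_pos (by linarith), ← exp_add]
      ring_nf

lemma max_natCast_one_le_div_log {L : ℝ} {r : ℕ} (hL₀ : 0 < L) (hL : 0 < log L)
    (hr : (r : ℝ) ≤ L / log L) : max (r : ℝ) 1 ≤ L / log L :=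
  max_le hr ((one_le_div hL).mpr ((log_le_sub_one_of_pos hL₀).trans (by linarith)))

lemma exp_max_one_mul_div_pow_le {L δ : ℝ} {r : ℕ} (hL₀ : 0 < L) (hL : 1 ≤ log L)
    (hδ : (1 + log (log L)) / log L ≤ δ) (hr : (r : ℝ) ≤ L / log L) :
    exp (max (r : ℝ) 1) * (L / max (r : ℝ) 1) ^ r ≤ exp (δ * L) := by
  have hmax := max_natCast_one_le_div_log hL₀ (by linarith) hr
  have hmaxL : L / log L ≤ L := div_le_self hL₀.le hL
  calc exp (max (r : ℝ) 1) * (L / max (r : ℝ) 1) ^ r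
      ≤ exp (max (r : ℝ) 1 * (1 + log (L / max (r : ℝ) 1))) :=
        exp_mul_div_pow_le (by positivity) (le_max_left _ _) (hmax.trans hmaxL)
    _ ≤ exp (L / log L * (1 + log (L / (L / log L)))) :=
        exp_le_exp.mpr (mul_one_add_log_div_le_of_le (by positivity) hmax hmaxL)
    _ = exp ((1 + log (log L)) / log L * L) := by
        rw [div_div_cancel₀ hL₀.ne']
        ring_nf
    _ ≤ exp (δ * L) := by gcongr

lemma tendsto_one_add_log_div_atTop :
    Tendsto (fun y : ℝ => (1 + log y) / y) atTop (𝓝 0) := by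
  have h := tendsto_inv_atTop_zero.add isLittleO_log_id_atTop.tendsto_div_nhds_zero
  rw [add_zero] at h
  refine h.congr fun y => ?_
  simp only [id, div_eq_inv_mul]
  ring

lemma eventually_one_add_log_log_log_div_log_log_le {δ : ℝ} (hδ : 0 < δ) :
    ∀ᶠ X : ℝ in atTop, (1 + log (log (log X))) / log (log X) ≤ δ :=
  (tendsto_one_add_log_div_atTop.comp (tendsto_log_atTop.comp tendsto_log_atTop)).eventually
    (eventually_le_nhds hδ)

lemma norm_iteratedDeriv_div_factorial_le {f : ℂ → ℂ} {c : ℂ} {ρ M : ℝ} (r : ℕ) (hρ : 0 < ρ)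
    (hf : DiffContOnCl ℂ f (ball c ρ)) (hM : ∀ z ∈ sphere c ρ, ‖f z‖ ≤ M) :
    ‖iteratedDeriv r f c / (r.factorial : ℂ)‖ ≤ M / ρ ^ r := by
  rw [norm_div, Complex.norm_natCast, div_le_iff₀ (by positivity)]
  exact (Complex.norm_iteratedDeriv_le_of_forall_mem_sphere_norm_le r hρ hf hM).trans_eq (by ring)

lemma rpow_add_div_log_div_pow {X : ℝ} (hX : 1 < X) (a t : ℝ) (r : ℕ) :
    X ^ (a + t / log X) / (t / log X) ^ r = X ^ a * (exp t * (log X / t) ^ r) := by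
  have hXρ : X ^ (t / log X) = exp t := by
    rw [rpow_def_of_pos (by linarith), mul_div_cancel₀ _ (log_pos hX).ne']
  rw [rpow_add (by linarith), hXρ, div_eq_mul_inv, ← inv_pow, inv_div, mul_assoc]

theorem stmt0_general (η C ε : ℝ) (hε : 0 < ε) :
    ∃ X₀ : ℝ, 0 < X₀ ∧ ∀ X : ℝ, X₀ ≤ X →
      ∀ r : ℕ, (r : ℝ) ≤ Real.log X / Real.log (Real.log X) →
        ∀ f : ℂ → ℂ,
          (∃ U : Set ℂ, IsOpen U ∧ Metric.closedBall (1 : ℂ) (1 / 2) ⊆ U ∧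
            DifferentiableOn ℂ f U) →
          (∀ s : ℂ, ‖s - 1‖ ≤ 1 / 2 →
            ‖f s‖ ≤ C * X ^ ((1 : ℝ) / 2 + ‖s - 1‖ - η)) →
          (∀ k : ℕ, k < r → iteratedDeriv k f 1 = 0) →
          ‖iteratedDeriv r f 1 / (r.factorial : ℂ)‖ ≤
            X ^ ((1 : ℝ) / 2 - η + ε) := by
  have hlarge : ∀ᶠ X : ℝ in atTop, 1 < X ∧ 2 ≤ log (log X) ∧ C ≤ X ^ (ε / 2) ∧
      (1 + log (log (log X))) / log (log X) ≤ ε / 2 :=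
    (eventually_gt_atTop 1).and <|
      ((tendsto_log_atTop.comp tendsto_log_atTop).eventually_ge_atTop 2).and <|
      ((tendsto_rpow_atTop (half_pos hε)).eventually_ge_atTop C).and <|
      eventually_one_add_log_log_log_div_log_log_le (half_pos hε)
  obtain ⟨X₁, hX₁⟩ := eventually_atTop.mp hlarge
  refine ⟨max X₁ 1, by positivity, ?_⟩
  rintro X hX r hr f ⟨U, -, hU, hf⟩ hbound -
  obtain ⟨hX, hM, hCX, hδ⟩ := hX₁ X (le_of_max_le_left hX)
  set L := log X
  set t : ℝ := max (r : ℝ) 1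
  have hL : 0 < L := log_pos hX
  have hρ : t / L ≤ 1 / 2 :=
    calc t / L ≤ L / log L / L := by gcongr; exact max_natCast_one_le_div_log hL (by linarith) hr
      _ = 1 / log L := by field_simp
      _ ≤ 1 / 2 := by gcongr
  have hsphere :
      ∀ s ∈ sphere (1 : ℂ) (t / L), ‖f s‖ ≤ C * X ^ ((1 : ℝ) / 2 + t / L - η) := by
    intro s hs
    rw [mem_sphere_iff_norm] at hs
    simpa [hs] using hbound s (hs ▸ hρ)
  calc ‖iteratedDeriv r f 1 / (r.factorial : ℂ)‖
      ≤ C * X ^ ((1 : ℝ) / 2 + t / L - η) / (t / L) ^ r :=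
        norm_iteratedDeriv_div_factorial_le r (by positivity)
          (hf.diffContOnCl_ball ((closedBall_subset_closedBall hρ).trans hU)) hsphere
    _ = C * X ^ ((1 : ℝ) / 2 - η) * (exp t * (L / t) ^ r) := by
        rw [add_sub_right_comm, mul_div_assoc, rpow_add_div_log_div_pow hX, mul_assoc]
    _ ≤ X ^ (ε / 2) * X ^ ((1 : ℝ) / 2 - η) * exp (ε / 2 * L) := by
        gcongr
        exact exp_max_one_mul_div_pow_le hL (by linarith) hδ hr
    _ = X ^ ((1 : ℝ) / 2 - η + ε) := by
        rw [mul_comm (ε / 2) L, ← rpow_def_of_pos (by linarith), ← rpow_add (by linarith),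
          ← rpow_add (by linarith)]
        ring_nf

/-- Fix real constants `η > 0`, `C > 0`, `ε > 0`. There exists `X₀ > 0` such
that for every `X ≥ X₀`, every natural number `r ≤ log X / log log X`, and every function
`f : ℂ → ℂ` that is complex-differentiable on (an open neighborhood of) the closed disk
`{s : |s - 1| ≤ 1/2}`, if `|f s| ≤ C * X ^ (1/2 + |s - 1| - η)` on that disk and the `k`-th
derivative of `f` at `1` vanishes for all `k < r`, then
`|f⁽ʳ⁾(1) / r!| ≤ X ^ (1/2 - η + ε)`. -/
theorem stmt0 (η C ε : ℝ) (hη : 0 < η) (hC : 0 < C) (hε : 0 < ε) :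
    ∃ X₀ : ℝ, 0 < X₀ ∧ ∀ X : ℝ, X₀ ≤ X →
      ∀ r : ℕ, (r : ℝ) ≤ Real.log X / Real.log (Real.log X) →
        ∀ f : ℂ → ℂ,
          (∃ U : Set ℂ, IsOpen U ∧ Metric.closedBall (1 : ℂ) (1 / 2) ⊆ U ∧
            DifferentiableOn ℂ f U) →
          (∀ s : ℂ, ‖s - 1‖ ≤ 1 / 2 →
            ‖f s‖ ≤ C * X ^ ((1 : ℝ) / 2 + ‖s - 1‖ - η)) →
          (∀ k : ℕ, k < r → iteratedDeriv k f 1 = 0) →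
          ‖iteratedDeriv r f 1 / (r.factorial : ℂ)‖ ≤
            X ^ ((1 : ℝ) / 2 - η + ε) :=
  stmt0_general η C ε hε
end

section
/- Let K be a number field with ring of integers O_K, and let m ≥ 1 be an integer. Then the group A_{m,K} is finite, and its cardinality satisfies #A_{m,K} = #(Cl(K)[m]) · #(O_K^×/(O_K^×)^m). -/
/-!
Let `I_K` be the group of invertible fractional ideals and `d : Kˣ → I_K` send `α` to `(α)`.
The valuations of `α` are all divisible by `m` exactly when `d α = J ^ m`, and `J` is unique
because `I_K` is torsion-free, so `α ↦ [J]` is a homomorphism from `A_{m,K}` to the class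
group. Its image is `Cl(K)[m]`: if `[J] ^ m = 1` then `J ^ m = d α` for some `α`. It kills `α`
exactly when `J = d γ`, i.e. when `α = u γ ^ m` for a unit `u`; so its kernel is the image of
`𝓞_Kˣ / (𝓞_Kˣ)^m`, which injects because a unit that is an `m`-th power in `K` is the `m`-th
power of an integral, hence unit, element. Finiteness follows from finiteness of the class
group and Dirichlet's unit theorem.
-/

open NumberField IsDedekindDomain FractionalIdeal nonZeroDivisors

theorem MonoidHom.card_eq_card_range_mul_card_ker {G H : Type*} [Group G] [Group H]
    (f : G →* H) : Nat.card G = Nat.card f.range * Nat.card f.ker := by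
  rw [Subgroup.card_eq_card_quotient_mul_card_subgroup f.ker,
    Nat.card_congr (QuotientGroup.quotientKerEquivRange f).toEquiv]

theorem Subgroup.card_eq_card_quotient_subgroupOf_of_comap_mk'_eq {G : Type*} [Group G]
    {N : Subgroup G} [N.Normal] {A : Subgroup (G ⧸ N)} {B : Subgroup G}
    (hB : A.comap (QuotientGroup.mk' N) = B) : Nat.card A = Nat.card (B ⧸ N.subgroupOf B) := by
  subst hB
  have hker : ((QuotientGroup.mk' N).subgroupComap A).ker =
      N.subgroupOf (A.comap (QuotientGroup.mk' N)) := by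
    ext x
    rw [MonoidHom.mem_ker, Subgroup.mem_subgroupOf, Subtype.ext_iff]
    exact QuotientGroup.eq_one_iff _
  refine Nat.card_congr ((QuotientGroup.quotientMulEquivOfEq hker).symm.trans
    (QuotientGroup.quotientKerEquivOfSurjective _ ?_)).toEquiv.symm
  exact MonoidHom.subgroupComap_surjective_of_surjective _ _ (QuotientGroup.mk'_surjective N)

section KummerCount

variable {U G I : Type*} [CommGroup U] [CommGroup G] [CommGroup I] {m : ℕ}

abbrev MonoidHom.preimagePowers (d : G →* I) (m : ℕ) : Subgroup G :=
  (powMonoidHom m : I →* I).range.comap d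

theorem MonoidHom.range_powMonoidHom_le_preimagePowers (d : G →* I) :
    (powMonoidHom m : G →* G).range ≤ d.preimagePowers m := by
  rintro _ ⟨γ, rfl⟩
  exact ⟨d γ, by simp⟩

theorem MonoidHom.comap_mk'_eq_preimagePowers (d : G →* I)
    {A : Subgroup (G ⧸ (powMonoidHom m : G →* G).range)}
    (hA : (A : Set (G ⧸ (powMonoidHom m : G →* G).range)) =
      {q | ∀ α : G, (α : G ⧸ (powMonoidHom m : G →* G).range) = q →
        d α ∈ (powMonoidHom m : I →* I).range}) :
    A.comap (QuotientGroup.mk' _) = d.preimagePowers m := by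
  ext α
  rw [Subgroup.mem_comap, ← SetLike.mem_coe, hA]
  refine ⟨fun h ↦ h α rfl, fun hα β hβ ↦ ?_⟩
  have hquot := d.range_powMonoidHom_le_preimagePowers (QuotientGroup.eq.mp hβ.symm)
  have hβ' : α * (α⁻¹ * β) ∈ d.preimagePowers m := mul_mem hα hquot
  rwa [mul_inv_cancel_left] at hβ'

variable {d : G →* I} (hpow : Function.Injective (powMonoidHom m : I →* I))

noncomputable def MonoidHom.preimagePowersRoot : d.preimagePowers m →* I :=
  (MonoidHom.ofInjective hpow).symm.toMonoidHom.comp (d.subgroupComap _)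

theorem MonoidHom.preimagePowersRoot_eq_iff {b : d.preimagePowers m} {J : I} :
    d.preimagePowersRoot hpow b = J ↔ J ^ m = d b := by
  rw [preimagePowersRoot, MonoidHom.comp_apply, MulEquiv.coe_toMonoidHom,
    MulEquiv.symm_apply_eq, Subtype.ext_iff, MonoidHom.ofInjective_apply, eq_comm]
  rfl

theorem MonoidHom.preimagePowersRoot_pow (b : d.preimagePowers m) :
    d.preimagePowersRoot hpow b ^ m = d b :=
  (d.preimagePowersRoot_eq_iff hpow).mp rfl

variable (d m) in
abbrev MonoidHom.KummerGroup : Type _ :=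
  d.preimagePowers m ⧸ (powMonoidHom m : G →* G).range.subgroupOf (d.preimagePowers m)

theorem MonoidHom.range_powMonoidHom_subgroupOf_le_ker_root :
    (powMonoidHom m : G →* G).range.subgroupOf (d.preimagePowers m) ≤
      ((QuotientGroup.mk' d.range).comp (d.preimagePowersRoot hpow)).ker := by
  rintro b ⟨γ, hγ⟩
  have hroot : d.preimagePowersRoot hpow b = d γ := by
    rw [preimagePowersRoot_eq_iff, ← map_pow, ← powMonoidHom_apply, hγ]
    rfl
  rw [MonoidHom.mem_ker, MonoidHom.comp_apply, hroot, QuotientGroup.mk'_apply,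
    QuotientGroup.eq_one_iff]
  exact ⟨γ, rfl⟩

noncomputable def MonoidHom.kummerHom : d.KummerGroup m →* I ⧸ d.range :=
  QuotientGroup.lift _ _ (d.range_powMonoidHom_subgroupOf_le_ker_root hpow)

theorem MonoidHom.kummerHom_mk (b : d.preimagePowers m) :
    d.kummerHom hpow b = (d.preimagePowersRoot hpow b : I ⧸ d.range) := rfl

theorem MonoidHom.range_kummerHom :
    (d.kummerHom hpow).range = (powMonoidHom m : I ⧸ d.range →* I ⧸ d.range).ker := by
  ext c
  rw [MonoidHom.mem_ker, powMonoidHom_apply]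
  constructor
  · rintro ⟨q, rfl⟩
    obtain ⟨b, rfl⟩ := QuotientGroup.mk_surjective q
    rw [kummerHom_mk, ← QuotientGroup.mk_pow, preimagePowersRoot_pow, QuotientGroup.eq_one_iff]
    exact ⟨b, rfl⟩
  · intro hc
    obtain ⟨J, rfl⟩ := QuotientGroup.mk_surjective c
    obtain ⟨α, hα⟩ := (QuotientGroup.eq_one_iff (N := d.range) (J ^ m)).mp
      (by rwa [QuotientGroup.mk_pow])
    refine ⟨((⟨α, J, hα.symm⟩ : d.preimagePowers m) : d.KummerGroup m), ?_⟩
    rw [kummerHom_mk, (d.preimagePowersRoot_eq_iff hpow).mpr hα.symm]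

variable {ι : U →* G} (hdι : d.comp ι = 1)

noncomputable def MonoidHom.kummerUnitsHom : U →* d.KummerGroup m :=
  (QuotientGroup.mk' _).comp <| ι.codRestrict _ fun u ↦ ⟨1, by simp [← d.comp_apply, hdι]⟩

theorem MonoidHom.ker_kummerUnitsHom :
    (d.kummerUnitsHom (m := m) hdι).ker = (powMonoidHom m : G →* G).range.comap ι := by
  ext u
  rw [MonoidHom.mem_ker, kummerUnitsHom, MonoidHom.comp_apply, QuotientGroup.mk'_apply,
    QuotientGroup.eq_one_iff, Subgroup.mem_subgroupOf, Subgroup.mem_comap]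
  rfl

theorem MonoidHom.ker_kummerHom (hι : d.ker ≤ ι.range) :
    (d.kummerHom hpow).ker = (d.kummerUnitsHom (m := m) hdι).range := by
  refine le_antisymm (fun q hq ↦ ?_) ?_
  · obtain ⟨b, rfl⟩ := QuotientGroup.mk_surjective q
    obtain ⟨γ, hγ⟩ := (QuotientGroup.eq_one_iff _).mp hq
    obtain ⟨u, hu⟩ := hι (show (b : G) * (γ ^ m)⁻¹ ∈ d.ker by
      rw [MonoidHom.mem_ker, map_mul, map_inv, map_pow, hγ, preimagePowersRoot_pow,
        mul_inv_cancel])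
    refine ⟨u, QuotientGroup.eq.mpr ⟨γ, ?_⟩⟩
    change γ ^ m = (ι u)⁻¹ * b
    rw [hu]
    group
  · rintro _ ⟨u, rfl⟩
    rw [MonoidHom.mem_ker, kummerUnitsHom, MonoidHom.comp_apply, QuotientGroup.mk'_apply,
      kummerHom_mk, (d.preimagePowersRoot_eq_iff hpow (J := 1)).mpr
        (by rw [one_pow]; exact (DFunLike.congr_fun hdι u).symm),
      QuotientGroup.mk_one]

theorem MonoidHom.card_kummerGroup (hpow : Function.Injective (powMonoidHom m : I →* I))
    (hι : d.ker = ι.range) :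
    Nat.card (d.KummerGroup m) = Nat.card (powMonoidHom m : I ⧸ d.range →* I ⧸ d.range).ker *
      Nat.card (U ⧸ (powMonoidHom m : G →* G).range.comap ι) := by
  have hdι : d.comp ι = 1 := MonoidHom.ext fun u ↦ hι.ge ⟨u, rfl⟩
  rw [(d.kummerHom hpow).card_eq_card_range_mul_card_ker, range_kummerHom,
    ker_kummerHom hpow hdι hι.le, ← ker_kummerUnitsHom hdι]
  exact congrArg _ (Nat.card_congr (QuotientGroup.quotientKerEquivRange _).toEquiv.symm)

end KummerCount

section Dedekind

variable {R K : Type*} [CommRing R] [IsDedekindDomain R] [Field K] [Algebra R K]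
  [IsFractionRing R K] {m : ℕ}

theorem FractionalIdeal.eq_of_count_eq {I J : FractionalIdeal R⁰ K} (hI : I ≠ 0) (hJ : J ≠ 0)
    (h : ∀ v : HeightOneSpectrum R, count K v I = count K v J) : I = J := by
  rw [← finprod_heightOneSpectrum_factorization' K hI,
    ← finprod_heightOneSpectrum_factorization' K hJ]
  simp_rw [h]

theorem FractionalIdeal.exists_pow_eq_of_dvd_count {I : FractionalIdeal R⁰ K} (hI : I ≠ 0)
    (h : ∀ v : HeightOneSpectrum R, (m : ℤ) ∣ count K v I) :
    ∃ J : FractionalIdeal R⁰ K, J ≠ 0 ∧ J ^ m = I := by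
  let J := ∏ᶠ v : HeightOneSpectrum R, (v.asIdeal : FractionalIdeal R⁰ K) ^ (count K v I / m)
  have hJ : J ≠ 0 := finprod_ne_zero fun v ↦ zpow_ne_zero _ (coeIdeal_ne_zero.mpr v.ne_bot)
  have hcount (v : HeightOneSpectrum R) : count K v J = count K v I / m :=
    count_finprod K v _ <| (finite_factors I).mono fun v hv ↦ by simp [hv]
  refine ⟨J, hJ, eq_of_count_eq (pow_ne_zero m hJ) hI fun v ↦ ?_⟩
  rw [count_pow, hcount, Int.mul_ediv_cancel' (h v)]

theorem FractionalIdeal.units_mem_range_powMonoidHom_iff (I : (FractionalIdeal R⁰ K)ˣ) :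
    I ∈ (powMonoidHom m).range ↔ ∀ v : HeightOneSpectrum R, (m : ℤ) ∣ count K v I := by
  constructor
  · rintro ⟨J, rfl⟩ v
    exact ⟨count K v J, by rw [powMonoidHom_apply, Units.val_pow_eq_pow_val, count_pow]⟩
  · intro h
    obtain ⟨J, hJ, hJI⟩ := exists_pow_eq_of_dvd_count I.ne_zero h
    exact ⟨Units.mk0 J hJ, Units.ext (by simp [hJI])⟩

theorem FractionalIdeal.units_powMonoidHom_injective (hm : m ≠ 0) :
    Function.Injective
      (powMonoidHom m : (FractionalIdeal R⁰ K)ˣ →* (FractionalIdeal R⁰ K)ˣ) := by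
  intro I J hIJ
  refine Units.ext (eq_of_count_eq I.ne_zero J.ne_zero fun v ↦ ?_)
  have hcount := congrArg (fun I : (FractionalIdeal R⁰ K)ˣ ↦ count K v I) hIJ
  simp only [powMonoidHom_apply, Units.val_pow_eq_pow_val, count_pow] at hcount
  exact mul_left_cancel₀ (Int.natCast_ne_zero.mpr hm) hcount

theorem IsDedekindDomain.HeightOneSpectrum.valuation_eq_exp_neg_count
    (v : HeightOneSpectrum R) {x : K} (hx : x ≠ 0) :
    v.valuation K x = WithZero.exp (-count K v (spanSingleton R⁰ x)) := by
  obtain ⟨⟨n, d⟩, rfl⟩ := IsLocalization.mk'_surjective R⁰ x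
  have hn : n ≠ 0 := by
    rintro rfl
    exact hx (IsLocalization.mk'_zero _)
  have hd : (d : R) ≠ 0 := nonZeroDivisors.coe_ne_zero d
  have hspan : spanSingleton R⁰ (IsLocalization.mk' K n d) =
      spanSingleton R⁰ ((algebraMap R K) (d : R))⁻¹ * ↑(Ideal.span {n} : Ideal R) := by
    rw [coeIdeal_span_singleton, spanSingleton_mul_spanSingleton,
      IsFractionRing.mk'_eq_div, div_eq_mul_inv, mul_comm]
  rw [count_well_defined K v (spanSingleton_ne_zero_iff.mpr hx) hspan,
    HeightOneSpectrum.valuation_of_mk', HeightOneSpectrum.intValuation_apply,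
    HeightOneSpectrum.intValuation_apply, v.intValuationDef_if_neg hn,
    v.intValuationDef_if_neg hd, ← WithZero.exp_sub]
  congr 1
  ring

theorem toPrincipalIdeal_mem_range_powMonoidHom_iff (α : Kˣ) :
    toPrincipalIdeal R K α ∈ (powMonoidHom m).range ↔
      ∀ v : HeightOneSpectrum R, ∃ k : ℤ, v.valuation K (α : K) =
        ((Multiplicative.ofAdd ((m : ℤ) * k) : Multiplicative ℤ) :
          WithZero (Multiplicative ℤ)) := by
  rw [units_mem_range_powMonoidHom_iff]
  refine forall_congr' fun v ↦ ?_
  rw [coe_toPrincipalIdeal, v.valuation_eq_exp_neg_count α.ne_zero]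
  change _ ↔ ∃ k : ℤ, _ = WithZero.exp ((m : ℤ) * k)
  simp only [WithZero.exp_inj, neg_eq_iff_eq_neg, ← mul_neg]
  exact ⟨fun ⟨k, hk⟩ ↦ ⟨-k, by rw [hk, neg_neg]⟩, fun ⟨k, hk⟩ ↦ ⟨-k, hk⟩⟩

theorem ker_toPrincipalIdeal :
    (toPrincipalIdeal R K).ker = (Units.map (algebraMap R K : R →* K)).range := by
  ext x
  rw [MonoidHom.mem_ker, ← map_one (toPrincipalIdeal R K), toPrincipalIdeal_eq_iff,
    coe_toPrincipalIdeal, Units.val_one, eq_comm, spanSingleton_eq_spanSingleton]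
  simp [Units.ext_iff, Units.smul_def, Algebra.smul_def]

theorem comap_units_map_range_powMonoidHom (hm : m ≠ 0) :
    (powMonoidHom m : Kˣ →* Kˣ).range.comap (Units.map (algebraMap R K : R →* K)) =
      (powMonoidHom m : Rˣ →* Rˣ).range := by
  have : Fact (0 < m) := ⟨Nat.pos_of_ne_zero hm⟩
  ext x
  rw [Subgroup.mem_comap, ← QuotientGroup.eq_one_iff,
    ← selmerGroup.fromUnit_ker (R := R) (K := K) (n := m), MonoidHom.mem_ker, Subtype.ext_iff]
  rfl

end Dedekind

theorem MulEquiv.card_subtype_pow_eq_one {G H : Type*} [CommGroup G] [CommGroup H] (e : G ≃* H)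
    (m : ℕ) : Nat.card {g : G // g ^ m = 1} = Nat.card (powMonoidHom m : H →* H).ker :=
  Nat.card_congr <| e.toEquiv.subtypeEquiv fun g ↦ by
    rw [MonoidHom.mem_ker, powMonoidHom_apply, MulEquiv.toEquiv_eq_coe, MulEquiv.coe_toEquiv,
      ← map_pow, MulEquiv.map_eq_one_iff]

/-- Let `K` be a number field and `m ≥ 1`. Let `A = A_{m,K}` be the subgroup of
`K^×/(K^×)^m` of classes of elements all of whose valuations at finite places are divisible by
`m`. Then `A` is finite and `#A = #(Cl(K)[m]) * #(𝓞_K^×/(𝓞_K^×)^m)`. -/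
theorem stmt4 (K : Type*) [Field K] [NumberField K] (m : ℕ) (hm : 1 ≤ m)
    (A : Subgroup (Kˣ ⧸ (powMonoidHom m : Kˣ →* Kˣ).range))
    (hA : (A : Set (Kˣ ⧸ (powMonoidHom m : Kˣ →* Kˣ).range)) =
      {q | ∀ α : Kˣ, (QuotientGroup.mk α : Kˣ ⧸ (powMonoidHom m : Kˣ →* Kˣ).range) = q →
        ∀ v : HeightOneSpectrum (𝓞 K), ∃ k : ℤ,
          v.valuation K ((α : K)) =
            ((Multiplicative.ofAdd ((m : ℤ) * k) : Multiplicative ℤ) :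
              WithZero (Multiplicative ℤ))}) :
    Finite A ∧
      Nat.card A =
        Nat.card {c : ClassGroup (𝓞 K) // c ^ m = 1} *
          Nat.card ((𝓞 K)ˣ ⧸ (powMonoidHom m : (𝓞 K)ˣ →* (𝓞 K)ˣ).range) := by
  have hm0 : m ≠ 0 := Nat.one_le_iff_ne_zero.mp hm
  simp_rw [← toPrincipalIdeal_mem_range_powMonoidHom_iff] at hA
  have hcard := (Subgroup.card_eq_card_quotient_subgroupOf_of_comap_mk'_eq
    ((toPrincipalIdeal (𝓞 K) K).comap_mk'_eq_preimagePowers hA)).trans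
    (MonoidHom.card_kummerGroup (units_powMonoidHom_injective hm0)
      (ker_toPrincipalIdeal (R := 𝓞 K) (K := K)))
  rw [comap_units_map_range_powMonoidHom hm0,
    ← (ClassGroup.equiv K).card_subtype_pow_eq_one] at hcard
  have : Group.FG (𝓞 K)ˣ := Group.fg_iff_monoid_fg.mpr inferInstance
  have : Finite ((𝓞 K)ˣ ⧸ (powMonoidHom m : (𝓞 K)ˣ →* (𝓞 K)ˣ).range) :=
    Subgroup.finiteIndex_iff_finite_quotient.mp
      (Subgroup.finiteIndex_range_powMonoidHom_of_fg _ hm0)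
  refine ⟨Nat.finite_of_card_ne_zero ?_, hcard⟩
  rw [hcard]
  have : Nonempty {c : ClassGroup (𝓞 K) // c ^ m = 1} := ⟨⟨1, one_pow m⟩⟩
  exact mul_ne_zero Nat.card_pos.ne' Nat.card_pos.ne'
end

section
/- Let K be a number field with ring of integers O_K, let m ≥ 1 be an integer, and let n be the degree of K over ℚ. Then #A_{m,K} ≤ m^n · #(Cl(K)[m]); in particular, the m-torsion subgroup of the class group and the group A_{m,K} have the same cardinality up to a multiplicative factor depending only on m and n. (This is the quantitative content of the second assertion of Proposition 3.4 of the paper, identifying the size of Cl(μ_m) with that of Cl(K)[m] up to O_{m,n}(1).) -/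
/-!
Let `H ⊆ Kˣ` consist of the `x` whose principal ideal `(x)` is the `m`-th power `I ^ m` of a
fractional ideal. By unique factorisation of fractional ideals these are exactly the `x` all of
whose valuations are divisible by `m`, so `A_{m,K} = H / (Kˣ)^m`. Since `I` is determined by `x`,
`x ↦ [I]` is a homomorphism `H → Cl(K)[m]`, and its kernel lies in `𝓞_Kˣ · (Kˣ)^m`. Hence
`#A ≤ [𝓞_Kˣ (Kˣ)^m : (Kˣ)^m] · #Cl(K)[m]`, and the first factor is at most `m ^ (r + 1) ≤ m ^ n`
because `𝓞_Kˣ` is generated by `r + 1` elements (Dirichlet), where `r + 1 = r₁ + r₂ ≤ n`.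
-/

open NumberField IsDedekindDomain FractionalIdeal
open scoped nonZeroDivisors WithZero

theorem Subgroup.card_eq_relIndex_comap_mk' {G : Type*} [Group G] (N : Subgroup G) [N.Normal]
    (A : Subgroup (G ⧸ N)) : Nat.card A = N.relIndex (A.comap (QuotientGroup.mk' N)) := by
  conv_lhs => rw [← map_comap_eq_self_of_surjective (QuotientGroup.mk'_surjective N) A]
  rw [← relIndex_bot_left, ← relIndex_comap, MonoidHom.comap_bot, QuotientGroup.ker_mk']

theorem Subgroup.index_le_pow_of_pow_mem {G : Type*} [CommGroup G] {m s : ℕ} [NeZero m]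
    {g : Fin s → G} (hg : closure (Set.range g) = ⊤) {L : Subgroup G} (hL : ∀ x, x ^ m ∈ L) :
    L.index ≤ m ^ s := by
  have hsurj : Function.Surjective fun d : Fin s → ZMod m => ∏ i, (g i : G ⧸ L) ^ (d i).val := by
    intro q
    induction q using QuotientGroup.induction_on with | H x => ?_
    obtain ⟨a, rfl⟩ := mem_closure_range_iff_of_fintype.mp (hg ▸ mem_top x)
    refine ⟨fun i => a i, ?_⟩
    simp only [QuotientGroup.mk_prod, QuotientGroup.mk_zpow]
    refine Finset.prod_congr rfl fun i _ => ?_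
    rw [← zpow_natCast, ZMod.val_intCast]
    exact (zpow_eq_zpow_emod' _ ((QuotientGroup.eq_one_iff _).mpr (hL (g i)))).symm
  calc L.index ≤ Nat.card (Fin s → ZMod m) := Nat.card_le_card_of_surjective _ hsurj
    _ = m ^ s := by simp [Nat.card_eq_fintype_card, ZMod.card]

theorem relIndex_powMonoidHom_range_units_sup_le {R K : Type*} [CommRing R] [Field K]
    [Algebra R K] {m s : ℕ} [NeZero m] {g : Fin s → Rˣ}
    (hg : Subgroup.closure (Set.range g) = ⊤) :
    (powMonoidHom m : Kˣ →* Kˣ).range.relIndex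
      ((Units.map (algebraMap R K : R →* K)).range ⊔ (powMonoidHom m).range) ≤ m ^ s := by
  rw [Subgroup.relIndex_sup_right, ← Subgroup.index_comap]
  exact Subgroup.index_le_pow_of_pow_mem hg fun u => ⟨Units.map _ u, (map_pow _ _ _).symm⟩

namespace FractionalIdeal

variable {R K : Type*} [CommRing R] [IsDedekindDomain R] [Field K] [Algebra R K]
  [IsFractionRing R K]

theorem count_spanSingleton (v : HeightOneSpectrum R) (x : Kˣ) :
    count K v (spanSingleton R⁰ (x : K)) = -(v.valuationOfNeZero x).toAdd := by
  set s := IsLocalization.sec R⁰ (x : K)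
  have hs : algebraMap R K (s.2 : R) ≠ 0 :=
    map_ne_zero_of_mem_nonZeroDivisors _ (IsFractionRing.injective R K) s.2.property
  have hx : spanSingleton R⁰ (x : K) =
      spanSingleton R⁰ (algebraMap R K (s.2 : R))⁻¹ * ↑(Ideal.span {s.1} : Ideal R) := by
    rw [coeIdeal_span_singleton, spanSingleton_mul_spanSingleton,
      ← IsLocalization.sec_spec R⁰ (x : K), mul_comm (x : K), inv_mul_cancel_left₀ hs]
  rw [count_well_defined K v (spanSingleton_ne_zero_iff.mpr x.ne_zero) hx]
  change _ = -(v.valuationOfNeZeroToFun x).toAdd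
  rw [HeightOneSpectrum.valuationOfNeZeroToFun, toAdd_ofAdd]
  ring

theorem eq_of_count_eq_s12 {I J : FractionalIdeal R⁰ K} (hI : I ≠ 0) (hJ : J ≠ 0)
    (h : ∀ v : HeightOneSpectrum R, count K v I = count K v J) : I = J := by
  rw [← finprod_heightOneSpectrum_factorization' K hI,
    ← finprod_heightOneSpectrum_factorization' K hJ]
  simp_rw [h]

theorem powMonoidHom_units_injective {m : ℕ} (hm : m ≠ 0) :
    Function.Injective (powMonoidHom m : (FractionalIdeal R⁰ K)ˣ →* _) := by
  intro I J hIJ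
  refine Units.ext <| eq_of_count_eq_s12 I.ne_zero J.ne_zero fun v => ?_
  have := congrArg (fun I : (FractionalIdeal R⁰ K)ˣ => count K v (I : FractionalIdeal R⁰ K)) hIJ
  simp only [powMonoidHom_apply, Units.val_pow_eq_pow_val, count_pow] at this
  exact mul_left_cancel₀ (Int.natCast_ne_zero.mpr hm) this

theorem exists_pow_eq_of_dvd_count_s12 {I : FractionalIdeal R⁰ K} (hI : I ≠ 0) {m : ℕ}
    (h : ∀ v : HeightOneSpectrum R, (m : ℤ) ∣ count K v I) : ∃ J ≠ 0, J ^ m = I := by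
  set J := ∏ᶠ v : HeightOneSpectrum R, (v.asIdeal : FractionalIdeal R⁰ K) ^ (count K v I / m)
  have hJ : J ≠ 0 := finprod_induction (· ≠ 0) one_ne_zero (fun _ _ => mul_ne_zero)
    fun v => zpow_ne_zero _ (coeIdeal_ne_zero.mpr v.ne_bot)
  refine ⟨J, hJ, eq_of_count_eq_s12 (pow_ne_zero m hJ) hI fun v => ?_⟩
  have hfin : ∀ᶠ v : HeightOneSpectrum R in Filter.cofinite, count K v I / m = 0 :=
    (finite_factors I).mono fun v hv => by rw [hv, Int.zero_ediv]
  rw [count_pow, count_finprod K v _ hfin, Int.mul_ediv_cancel' (h v)]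

end FractionalIdeal

namespace IsDedekindDomain

section

variable (R K : Type*) [CommRing R] [Field K] [Algebra R K] [IsFractionRing R K] (m : ℕ)

noncomputable def idealPowSubgroup : Subgroup Kˣ :=
  (powMonoidHom m : (FractionalIdeal R⁰ K)ˣ →* _).range.comap (toPrincipalIdeal R K)

variable {R K m}

theorem powMonoidHom_range_le_idealPowSubgroup :
    (powMonoidHom m : Kˣ →* Kˣ).range ≤ idealPowSubgroup R K m := by
  rintro _ ⟨y, rfl⟩
  exact ⟨toPrincipalIdeal R K y, (map_pow _ _ _).symm⟩

theorem units_range_le_idealPowSubgroup [IsDomain R] :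
    (Units.map (algebraMap R K : R →* K)).range ≤ idealPowSubgroup R K m := by
  rintro _ ⟨u, rfl⟩
  refine ⟨1, Units.ext ?_⟩
  rw [powMonoidHom_apply, one_pow, Units.val_one, coe_toPrincipalIdeal, ← spanSingleton_one]
  exact spanSingleton_eq_spanSingleton.mpr
    ⟨u, by rw [Units.smul_def, Algebra.smul_def, mul_one]; rfl⟩

end

variable {R K : Type*} [CommRing R] [IsDedekindDomain R] [Field K] [Algebra R K]
  [IsFractionRing R K] {m : ℕ}

theorem mem_idealPowSubgroup_iff_dvd_count {x : Kˣ} :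
    x ∈ idealPowSubgroup R K m ↔
      ∀ v : HeightOneSpectrum R, (m : ℤ) ∣ count K v (spanSingleton R⁰ (x : K)) := by
  constructor
  · rintro ⟨J, hJ⟩ v
    rw [← coe_toPrincipalIdeal, ← hJ, powMonoidHom_apply, Units.val_pow_eq_pow_val, count_pow]
    exact dvd_mul_right _ _
  · intro hdvd
    obtain ⟨J, hJ0, hJ⟩ :=
      exists_pow_eq_of_dvd_count_s12 (spanSingleton_ne_zero_iff.mpr x.ne_zero) hdvd
    exact ⟨Units.mk0 J hJ0, Units.ext <| by simp [hJ]⟩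

theorem mem_idealPowSubgroup_iff_valuation {x : Kˣ} :
    x ∈ idealPowSubgroup R K m ↔ ∀ v : HeightOneSpectrum R, ∃ k : ℤ,
      v.valuation K (x : K) = ((Multiplicative.ofAdd ((m : ℤ) * k) : Multiplicative ℤ) : ℤᵐ⁰) := by
  rw [mem_idealPowSubgroup_iff_dvd_count]
  refine forall_congr' fun v => ?_
  rw [count_spanSingleton, dvd_neg, ← v.valuationOfNeZero_eq]
  simp only [WithZero.coe_inj, Dvd.dvd]
  exact exists_congr fun k =>
    ⟨fun h => by rw [← h, ofAdd_toAdd], fun h => by rw [h, toAdd_ofAdd]⟩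

noncomputable def idealPowRoot [NeZero m] : idealPowSubgroup R K m →* (FractionalIdeal R⁰ K)ˣ :=
  (MonoidHom.ofInjective (powMonoidHom_units_injective (NeZero.ne m))).symm.toMonoidHom.comp
    (((toPrincipalIdeal R K).comp (idealPowSubgroup R K m).subtype).codRestrict _ fun x => x.2)

theorem idealPowRoot_pow [NeZero m] (x : idealPowSubgroup R K m) :
    idealPowRoot x ^ m = toPrincipalIdeal R K x :=
  congrArg Subtype.val <| (MonoidHom.ofInjective (powMonoidHom_units_injective (R := R)
    (K := K) (NeZero.ne m))).apply_symm_apply ⟨toPrincipalIdeal R K x, x.2⟩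

theorem classGroup_mk_idealPowRoot_pow_eq_one [NeZero m] (x : idealPowSubgroup R K m) :
    ClassGroup.mk K (idealPowRoot x) ^ m = 1 := by
  rw [← map_pow, idealPowRoot_pow, ClassGroup.mk_eq_one_iff, coe_toPrincipalIdeal,
    coe_spanSingleton]
  exact ⟨⟨((x : Kˣ) : K), rfl⟩⟩

theorem mem_sup_of_classGroup_mk_idealPowRoot_eq_one [NeZero m] {x : idealPowSubgroup R K m}
    (hx : ClassGroup.mk K (idealPowRoot x) = 1) :
    (x : Kˣ) ∈ (Units.map (algebraMap R K : R →* K)).range ⊔ (powMonoidHom m).range := by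
  obtain ⟨⟨y, hy⟩⟩ := ClassGroup.mk_eq_one_iff.mp hx
  have hroot : (idealPowRoot x : FractionalIdeal R⁰ K) = spanSingleton R⁰ y :=
    coeToSubmodule_injective <| hy.trans (coe_spanSingleton R⁰ y).symm
  have hy0 : y ≠ 0 := by
    rintro rfl
    exact (idealPowRoot x).ne_zero (hroot.trans spanSingleton_zero)
  have hx : spanSingleton R⁰ ((Units.mk0 y hy0 ^ m : Kˣ) : K) =
      spanSingleton R⁰ ((x : Kˣ) : K) := by
    rw [← coe_toPrincipalIdeal, ← coe_toPrincipalIdeal, map_pow, ← idealPowRoot_pow]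
    simp [hroot]
  obtain ⟨u, hu⟩ := spanSingleton_eq_spanSingleton.mp hx
  have hxu : (x : Kˣ) = Units.map (algebraMap R K : R →* K) u * Units.mk0 y hy0 ^ m :=
    Units.ext (by rw [← hu, Units.smul_def, Algebra.smul_def]; rfl)
  rw [hxu]
  exact Subgroup.mul_mem_sup ⟨u, rfl⟩ ⟨Units.mk0 y hy0, rfl⟩

theorem relIndex_idealPowSubgroup_le_card_torsion [NeZero m] [Finite (ClassGroup R)] :
    ((Units.map (algebraMap R K : R →* K)).range ⊔ (powMonoidHom m).range).relIndex
        (idealPowSubgroup R K m) ≤ Nat.card {c : ClassGroup R // c ^ m = 1} := by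
  set φ := (ClassGroup.mk K).comp (idealPowRoot (R := R) (K := K) (m := m))
  have hker : φ.ker ≤ ((Units.map (algebraMap R K : R →* K)).range ⊔
      (powMonoidHom m).range).subgroupOf (idealPowSubgroup R K m) :=
    fun x hx => mem_sup_of_classGroup_mk_idealPowRoot_eq_one hx
  calc _ ≤ φ.ker.index := Subgroup.index_antitone hker
    _ = Nat.card φ.range := Subgroup.index_ker φ
    _ ≤ _ := Nat.card_mono (Set.toFinite {c : ClassGroup R | c ^ m = 1}) <| by
      rintro _ ⟨x, rfl⟩
      exact classGroup_mk_idealPowRoot_pow_eq_one x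

end IsDedekindDomain

namespace NumberField.Units

variable (K : Type*) [Field K] [NumberField K]

theorem exists_closure_range_eq_top :
    ∃ g : Fin (rank K + 1) → (𝓞 K)ˣ, Subgroup.closure (Set.range g) = ⊤ := by
  obtain ⟨ζ, hζ⟩ := IsCyclic.exists_generator (α := torsion K)
  have htorsion : Subgroup.zpowers (ζ : (𝓞 K)ˣ) = torsion K := by
    refine le_antisymm (Subgroup.zpowers_le.mpr ζ.2) fun x hx => ?_
    obtain ⟨k, hk⟩ := hζ ⟨x, hx⟩
    exact ⟨k, congrArg Subtype.val hk⟩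
  refine ⟨Fin.cons (ζ : (𝓞 K)ˣ) (fundSystem K), ?_⟩
  rw [Fin.range_cons, Set.insert_eq, Subgroup.closure_union, ← Subgroup.zpowers_eq_closure,
    htorsion, sup_comm, closure_fundSystem_sup_torsion_eq_top]

theorem rank_add_one_le_finrank : rank K + 1 ≤ Module.finrank ℚ K := by
  have := InfinitePlace.card_add_two_mul_card_eq_rank K
  have := InfinitePlace.card_eq_nrRealPlaces_add_nrComplexPlaces K
  have : 0 < Fintype.card (InfinitePlace K) := Fintype.card_pos
  rw [rank]
  omega

end NumberField.Units

/-- Let `K` be a number field of degree `n` and `m ≥ 1`. Let `A = A_{m,K}` be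
the subgroup of `K^×/(K^×)^m` of classes of elements all of whose valuations at finite places
are divisible by `m`. Then `#A ≤ m^n * #(Cl(K)[m])`. -/
theorem stmt12 (K : Type*) [Field K] [NumberField K] (m : ℕ) (hm : 1 ≤ m)
    (n : ℕ) (hn : Module.finrank ℚ K = n)
    (A : Subgroup (Kˣ ⧸ (powMonoidHom m : Kˣ →* Kˣ).range))
    (hA : (A : Set (Kˣ ⧸ (powMonoidHom m : Kˣ →* Kˣ).range)) =
      {q | ∀ α : Kˣ, (QuotientGroup.mk α : Kˣ ⧸ (powMonoidHom m : Kˣ →* Kˣ).range) = q →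
        ∀ v : HeightOneSpectrum (𝓞 K), ∃ k : ℤ,
          v.valuation K ((α : K)) =
            ((Multiplicative.ofAdd ((m : ℤ) * k) : Multiplicative ℤ) :
              WithZero (Multiplicative ℤ))}) :
    Nat.card A ≤ m ^ n * Nat.card {c : ClassGroup (𝓞 K) // c ^ m = 1} := by
  have : NeZero m := ⟨by omega⟩
  set U := (Units.map (algebraMap (𝓞 K) K : 𝓞 K →* K)).range
  set H := idealPowSubgroup (𝓞 K) K m
  have hAH : A.comap (QuotientGroup.mk' _) = H := by
    ext α
    rw [Subgroup.mem_comap, ← SetLike.mem_coe, hA]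
    simp_rw [← mem_idealPowSubgroup_iff_valuation]
    refine ⟨fun h => h α rfl, fun hα β hβ => ?_⟩
    have hβα : β⁻¹ * α ∈ H := powMonoidHom_range_le_idealPowSubgroup (QuotientGroup.eq.mp hβ)
    simpa using mul_mem hα (inv_mem hβα)
  obtain ⟨g, hg⟩ := Units.exists_closure_range_eq_top K
  calc Nat.card A = (powMonoidHom m).range.relIndex H := by
        rw [Subgroup.card_eq_relIndex_comap_mk', hAH]
    _ = (powMonoidHom m).range.relIndex (U ⊔ (powMonoidHom m).range) *
          (U ⊔ (powMonoidHom m).range).relIndex H :=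
        (Subgroup.relIndex_mul_relIndex _ _ _ le_sup_right
          (sup_le units_range_le_idealPowSubgroup powMonoidHom_range_le_idealPowSubgroup)).symm
    _ ≤ m ^ n * Nat.card {c : ClassGroup (𝓞 K) // c ^ m = 1} :=
        Nat.mul_le_mul ((relIndex_powMonoidHom_range_units_sup_le hg).trans
            (hn ▸ Nat.pow_le_pow_right hm (Units.rank_add_one_le_finrank K)))
          relIndex_idealPowSubgroup_le_card_torsion
end
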